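/- If G is an r-regular graph having a star set X for a non-main eigenvalue μ such that G - X = K_s ∇ tK_1 with s, t ≥ 2, and if t + μ = 0, then μ = -2, t = 2, and G is the cocktail party graph, i.e., G is the complement of (s+1)K_2 (equivalently, K_{2s+2} minus a perfect matching). -/

import Mathlib

open Matrix

open scoped Classical

noncomputable section

variable {V : Type*} [Fintype V] [DecidableEq V]

/-- The real adjacency matrix of a graph. -/
def adjMat (G : SimpleGraph V) : Matrix V V ℝ :=
  letI := Classical.decRel G.Adj
  G.adjMatrix ℝ

/-- `μ` is an (adjacency) eigenvalue of `G`. -/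
def IsEigen (G : SimpleGraph V) (μ : ℝ) : Prop :=
  Module.End.HasEigenvalue (Matrix.toLin' (adjMat G)) μ

/-- The multiplicity of `μ` as an eigenvalue of `G`. -/
def eigMult (G : SimpleGraph V) (μ : ℝ) : ℕ :=
  Module.finrank ℝ (Module.End.eigenspace (Matrix.toLin' (adjMat G)) μ)

/-- `X` is a star set for `μ` in `G`: `|X|` equals the multiplicity of `μ` and `μ` is
not an eigenvalue of `G - X`. -/
def IsStarSet (G : SimpleGraph V) (μ : ℝ) (X : Finset V) : Prop :=
  X.card = eigMult G μ ∧ ¬ IsEigen (G.induce ((↑X : Set V)ᶜ)) μ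

/-- `μ` is a non-main eigenvalue: every `μ`-eigenvector is orthogonal to the
all-ones vector. -/
def IsNonMain (G : SimpleGraph V) (μ : ℝ) : Prop :=
  ∀ x : V → ℝ, (adjMat G).mulVec x = μ • x → x ⬝ᵥ (fun _ => 1) = 0

/-- The join `G ∇ H` of two graphs. -/
def joinG {α β : Type*} (G : SimpleGraph α) (H : SimpleGraph β) : SimpleGraph (α ⊕ β) where
  Adj u v :=
    match u, v with
    | .inl a, .inl b => G.Adj a b
    | .inr a, .inr b => H.Adj a b
    | _, _ => True
  symm := ⟨by rintro (a | a) (b | b) h <;> simp_all <;> exact h.symm⟩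
  loopless := ⟨by
    rintro (a | a) h
    · exact G.loopless.irrefl _ h
    · exact H.loopless.irrefl _ h⟩

/-- The perfect matching graph `nK_2` on `Fin n × Fin 2`. -/
def matchingG (n : ℕ) : SimpleGraph (Fin n × Fin 2) where
  Adj u v := u.1 = v.1 ∧ u.2 ≠ v.2
  symm := ⟨by rintro ⟨i, a⟩ ⟨j, b⟩ ⟨h1, h2⟩; exact ⟨h1.symm, h2.symm⟩⟩
  loopless := ⟨by rintro ⟨i, a⟩ ⟨_, h⟩; exact h rfl⟩

end

/-!
For `u ∈ X` let `f_u` be the `μ`-eigenvector that is the indicator of `u` on `X`; it exists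
because restriction to a star set is an isomorphism from the eigenspace onto `ℝ^X`. Write `S`
for the clique `K_s` and `T` for the coclique `tK_1` of `G - X`. The eigenvalue equations of
`f_u` on `S ∪ T ∪ {u}`, with `∑ f_u = 0` (non-main) and `μ = -t`, give `u ~ T`, `f_u = -1` on
`T`, `(t - 1) f_u = [u ≁ ·]` on `S`, and hence that `u` has exactly `(t - 1)²` non-neighbours
in `S`. The equation at another `v ∈ X` says that `(t - 1)(t - A_{vu})` vertices of `S` are
adjacent to `v` but not to `u`; as these are among the `(t - 1)²` non-neighbours of `u`, `X`
is a clique and distinct vertices of `X` have disjoint non-neighbourhoods in `S`. Comparing the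
degrees of `u` and of a vertex of `T` gives `(t - 1)² = t - 1`, so `t = 2`; comparing a vertex
of `S` with one of `T` shows that it has a non-neighbour in `X`. So non-adjacency pairs `X`
perfectly with `S`, and the two vertices of `T` are the last non-adjacent pair.
-/

open Finset

variable {V : Type*}

theorem adjMat_apply (G : SimpleGraph V) (v w : V) :
    adjMat G v w = if G.Adj v w then 1 else 0 := by
  simp [adjMat, SimpleGraph.adjMatrix_apply]

theorem adjMat_induce_mulVec [Fintype V] {G : SimpleGraph V} {S : Set V} [Fintype S]
    {f : V → ℝ} (hf : ∀ v ∉ S, f v = 0) (w : S) :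
    (adjMat (G.induce S) *ᵥ fun v => f v) w = (adjMat G *ᵥ f) w := by
  simp only [mulVec, dotProduct, adjMat_apply, SimpleGraph.comap_adj,
    Function.Embedding.subtype_apply]
  rw [← Finset.sum_subtype S.toFinset (fun v => by simp)
    (fun v => (if G.Adj w v then (1 : ℝ) else 0) * f v)]
  exact Finset.sum_subset (Finset.subset_univ _) fun v _ hv => by
    rw [hf v (by simpa using hv), mul_zero]

theorem sum_univ_eq_sum_add_sum_equiv_compl [Fintype V] [DecidableEq V] {W M : Type*}
    [Fintype W] [AddCommMonoid M] {X : Finset V} (σ : W ≃ ((↑X : Set V)ᶜ : Set V))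
    (g : V → M) : ∑ v, g v = ∑ x ∈ X, g x + ∑ w, g (σ w) := by
  rw [← Finset.sum_add_sum_compl X g, σ.sum_comp (fun v : ((↑X : Set V)ᶜ : Set V) => g v)]
  exact congrArg _ (Finset.sum_subtype _ (by simp) g)

section StarSet

variable [Fintype V] [DecidableEq V] {G : SimpleGraph V} {μ : ℝ} {X : Finset V}

theorem eq_zero_of_mulVec_eq_smul_of_eq_zero_on (hX : ¬ IsEigen (G.induce (↑X : Set V)ᶜ) μ)
    {f : V → ℝ} (hf : adjMat G *ᵥ f = μ • f) (hfX : ∀ x ∈ X, f x = 0) : f = 0 := by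
  by_contra hne
  apply hX
  refine Module.End.hasEigenvalue_of_hasEigenvector
    (x := fun v : ((↑X : Set V)ᶜ : Set V) => f v) ⟨?_, fun h0 => hne ?_⟩
  · rw [Module.End.mem_eigenspace_iff, Matrix.toLin'_apply]
    funext w
    rw [adjMat_induce_mulVec (fun v hv => hfX v (by simpa using hv)), hf]
    rfl
  · funext v
    by_cases hv : v ∈ X
    · exact hfX v hv
    · exact congrFun h0 ⟨v, hv⟩

namespace IsStarSet

theorem nonempty (hX : IsStarSet G μ X) (hμ : IsEigen G μ) : X.Nonempty := by
  rw [← Finset.card_pos, hX.1, eigMult, Nat.pos_iff_ne_zero]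
  exact fun h => Module.End.hasEigenvalue_iff.1 hμ (Submodule.finrank_eq_zero.1 h)

theorem exists_mulVec_eq_smul_eq_on (hX : IsStarSet G μ X) (g : V → ℝ) :
    ∃ f : V → ℝ, adjMat G *ᵥ f = μ • f ∧ ∀ x ∈ X, f x = g x := by
  set E := Module.End.eigenspace (Matrix.toLin' (adjMat G)) μ
  let ρ : E →ₗ[ℝ] (X → ℝ) := LinearMap.funLeft ℝ ℝ (Subtype.val : X → V) ∘ₗ E.subtype
  have hmem (f : E) : adjMat G *ᵥ (f : V → ℝ) = μ • (f : V → ℝ) := by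
    rw [← Matrix.toLin'_apply]
    exact Module.End.mem_eigenspace_iff.1 f.2
  have hρ : Function.Injective ρ := by
    rw [injective_iff_map_eq_zero]
    intro f hf
    exact Subtype.ext (eq_zero_of_mulVec_eq_smul_of_eq_zero_on hX.2 (hmem f)
      fun x hx => congrFun hf ⟨x, hx⟩)
  have hdim : Module.finrank ℝ E = Module.finrank ℝ (X → ℝ) := by
    rw [Module.finrank_fintype_fun_eq_card, Fintype.card_coe, hX.1]
    rfl
  obtain ⟨f, hf⟩ :=
    (LinearMap.injective_iff_surjective_of_finrank_eq_finrank hdim).1 hρ fun x => g x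
  exact ⟨f, hmem f, fun x hx => congrFun hf ⟨x, hx⟩⟩

end IsStarSet

structure IsStarBasisVector (G : SimpleGraph V) (μ : ℝ) (X : Finset V) (u : V) (f : V → ℝ) :
    Prop where
  mulVec_eq : adjMat G *ᵥ f = μ • f
  eq_on : ∀ x ∈ X, f x = if x = u then 1 else 0

theorem IsStarSet.exists_isStarBasisVector (hX : IsStarSet G μ X) (u : V) :
    ∃ f, IsStarBasisVector G μ X u f := by
  obtain ⟨f, hf, hfX⟩ := hX.exists_mulVec_eq_smul_eq_on fun x => if x = u then 1 else 0
  exact ⟨f, hf, hfX⟩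

end StarSet

section JoinComplement

variable {s t : ℕ} {G : SimpleGraph V} {X : Finset V}
  (e : G.induce (↑X : Set V)ᶜ ≃g joinG (⊤ : SimpleGraph (Fin s)) (⊥ : SimpleGraph (Fin t)))

def sVtx (i : Fin s) : V := e.symm (.inl i)

def tVtx (j : Fin t) : V := e.symm (.inr j)

theorem adj_sVtx_sVtx {i i' : Fin s} : G.Adj (sVtx e i) (sVtx e i') ↔ i ≠ i' :=
  e.symm.map_adj_iff

theorem adj_sVtx_tVtx (i : Fin s) (j : Fin t) : G.Adj (sVtx e i) (tVtx e j) :=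
  e.symm.map_adj_iff.2 trivial

theorem adj_tVtx_sVtx (j : Fin t) (i : Fin s) : G.Adj (tVtx e j) (sVtx e i) :=
  (adj_sVtx_tVtx e i j).symm

theorem not_adj_tVtx_tVtx (j j' : Fin t) : ¬ G.Adj (tVtx e j) (tVtx e j') :=
  fun h => (e.symm.map_adj_iff.1 h : False)

theorem sVtx_notMem (i : Fin s) : sVtx e i ∉ X := (e.symm _).2

theorem tVtx_injective : Function.Injective (tVtx e) :=
  fun _ _ h => Sum.inr_injective (e.symm.injective (Subtype.ext h))

theorem mem_or_exists_sVtx_or_exists_tVtx (v : V) :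
    v ∈ X ∨ (∃ i, sVtx e i = v) ∨ ∃ j, tVtx e j = v := by
  by_cases hv : v ∈ X
  · exact .inl hv
  · obtain ⟨z, hz⟩ := e.symm.surjective ⟨v, hv⟩
    rcases z with i | j
    · exact .inr (.inl ⟨i, congrArg Subtype.val hz⟩)
    · exact .inr (.inr ⟨j, congrArg Subtype.val hz⟩)

variable [Fintype V] [DecidableEq V]

theorem sum_univ_eq_sum_add_sum_sVtx_add_sum_tVtx {M : Type*} [AddCommMonoid M] (g : V → M) :
    ∑ v, g v = ∑ x ∈ X, g x + ∑ i, g (sVtx e i) + ∑ j, g (tVtx e j) := by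
  rw [sum_univ_eq_sum_add_sum_equiv_compl e.symm.toEquiv, Fintype.sum_sum_type, add_assoc]
  rfl

theorem degree_eq_card_add_card_add_card (v : V) :
    G.degree v =
      #{x ∈ X | G.Adj v x} + #{i | G.Adj v (sVtx e i)} + #{j | G.Adj v (tVtx e j)} := by
  rw [← SimpleGraph.card_neighborFinset_eq_degree, SimpleGraph.neighborFinset_eq_filter,
    Finset.card_filter, sum_univ_eq_sum_add_sum_sVtx_add_sum_tVtx e, Finset.card_filter,
    Finset.card_filter, Finset.card_filter]

theorem degree_tVtx {j : Fin t} (hXT : ∀ x ∈ X, G.Adj x (tVtx e j)) :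
    G.degree (tVtx e j) = #X + s := by
  rw [degree_eq_card_add_card_add_card e, Finset.filter_true_of_mem fun x hx => (hXT x hx).symm]
  simp [adj_tVtx_sVtx, not_adj_tVtx_tVtx]

theorem degree_sVtx_add_one (i : Fin s) :
    G.degree (sVtx e i) + 1 = #{x ∈ X | G.Adj (sVtx e i) x} + s + t := by
  rw [degree_eq_card_add_card_add_card e]
  have h := Finset.card_erase_add_one (Finset.mem_univ i)
  rw [← Finset.filter_ne univ i] at h
  simp only [adj_sVtx_sVtx, adj_sVtx_tVtx, Finset.filter_true, card_univ,
    Fintype.card_fin] at h ⊢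
  omega

theorem degree_add_one_add_card_not_adj {u : V} (hu : u ∈ X)
    (hXX : ∀ x ∈ X, x ≠ u → G.Adj u x) (huT : ∀ j, G.Adj u (tVtx e j)) :
    G.degree u + 1 + #{i | ¬ G.Adj u (sVtx e i)} = #X + s + t := by
  rw [degree_eq_card_add_card_add_card e]
  have hX : {x ∈ X | G.Adj u x} = X.erase u := by
    ext x
    simp only [Finset.mem_filter, Finset.mem_erase]
    exact ⟨fun ⟨hx, hadj⟩ => ⟨(G.ne_of_adj hadj).symm, hx⟩,
      fun ⟨hne, hx⟩ => ⟨hx, hXX x hx hne⟩⟩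
  have hS := Finset.card_filter_add_card_filter_not (s := univ) fun i => G.Adj u (sVtx e i)
  have := Finset.card_erase_add_one hu
  simp only [hX, huT, Finset.filter_true, card_univ, Fintype.card_fin] at hS ⊢
  omega

namespace IsStarBasisVector

variable {μ : ℝ} {u : V} {f : V → ℝ}

theorem sum_mul_eq (hf : IsStarBasisVector G μ X u f) (hu : u ∈ X) (g : V → ℝ) :
    ∑ x ∈ X, g x * f x = g u := by
  rw [Finset.sum_congr rfl fun x hx => by rw [hf.eq_on x hx]]
  simp [hu]

theorem mul_apply_eq (hf : IsStarBasisVector G μ X u f) (hu : u ∈ X) (v : V) :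
    μ * f v = adjMat G v u + ∑ i, adjMat G v (sVtx e i) * f (sVtx e i)
      + ∑ j, adjMat G v (tVtx e j) * f (tVtx e j) := by
  have h := congrFun hf.mulVec_eq v
  rw [Pi.smul_apply, smul_eq_mul, mulVec, dotProduct,
    sum_univ_eq_sum_add_sum_sVtx_add_sum_tVtx e] at h
  rw [← h, hf.sum_mul_eq hu]

theorem mul_apply_tVtx_eq (hf : IsStarBasisVector G μ X u f) (hu : u ∈ X) (j : Fin t) :
    μ * f (tVtx e j) = adjMat G (tVtx e j) u + ∑ i, f (sVtx e i) := by
  simp [hf.mul_apply_eq e hu, adjMat_apply, adj_tVtx_sVtx, not_adj_tVtx_tVtx]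

theorem mul_apply_sVtx_eq (hf : IsStarBasisVector G μ X u f) (hu : u ∈ X) (i : Fin s) :
    μ * f (sVtx e i) = adjMat G (sVtx e i) u + (∑ i', f (sVtx e i') - f (sVtx e i))
      + ∑ j, f (tVtx e j) := by
  simp only [hf.mul_apply_eq e hu, adjMat_apply, adj_sVtx_sVtx, adj_sVtx_tVtx, ne_eq, ite_not,
    ite_mul, zero_mul, one_mul, Finset.sum_ite, sum_const_zero, zero_add, if_true,
    add_left_inj, add_right_inj]
  rw [← Finset.sum_erase_eq_sub (Finset.mem_univ i), ← Finset.filter_ne]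

theorem one_add_sum_sVtx_add_sum_tVtx (hf : IsStarBasisVector G μ X u f) (hu : u ∈ X)
    (hμ : IsNonMain G μ) : 1 + ∑ i, f (sVtx e i) + ∑ j, f (tVtx e j) = 0 := by
  have h := hμ f hf.mulVec_eq
  have hX := hf.sum_mul_eq hu 1
  simp only [Pi.one_apply, one_mul] at hX
  simpa only [dotProduct, mul_one, sum_univ_eq_sum_add_sum_sVtx_add_sum_tVtx e, hX] using h

theorem adj_tVtx (hf : IsStarBasisVector G μ X u f) (hu : u ∈ X) (hμ : IsNonMain G μ)
    (htμ : (t : ℝ) + μ = 0) (j : Fin t) : G.Adj u (tVtx e j) := by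
  have hsum : ∑ j, (1 - adjMat G (tVtx e j) u) = 0 := by
    have hrow := Finset.sum_congr rfl fun j (_ : j ∈ univ) => hf.mul_apply_tVtx_eq e hu j
    rw [← Finset.mul_sum, Finset.sum_add_distrib, Finset.sum_const, card_univ,
      Fintype.card_fin, nsmul_eq_mul] at hrow
    rw [Finset.sum_sub_distrib, Finset.sum_const, card_univ, Fintype.card_fin, nsmul_eq_mul,
      mul_one]
    linear_combination hrow - (∑ j, f (tVtx e j)) * htμ
      + (t : ℝ) * hf.one_add_sum_sVtx_add_sum_tVtx e hu hμ
  have hj := (Finset.sum_eq_zero_iff_of_nonneg fun j _ => ?_).1 hsum j (mem_univ j)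
  · by_contra hnadj
    simp [adjMat_apply, G.adj_comm, hnadj] at hj
  · by_cases hadj : G.Adj (tVtx e j) u <;> simp [adjMat_apply, hadj]

theorem sub_one_mul_apply_sVtx (hf : IsStarBasisVector G μ X u f) (hu : u ∈ X)
    (hμ : IsNonMain G μ) (htμ : (t : ℝ) + μ = 0) (i : Fin s) :
    ((t : ℝ) - 1) * f (sVtx e i) = 1 - adjMat G (sVtx e i) u := by
  linear_combination -hf.mul_apply_sVtx_eq e hu i + f (sVtx e i) * htμ
    - hf.one_add_sum_sVtx_add_sum_tVtx e hu hμ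

theorem apply_tVtx (hf : IsStarBasisVector G μ X u f) (hu : u ∈ X) (hμ : IsNonMain G μ)
    (htμ : (t : ℝ) + μ = 0) (ht : 1 < t) (j : Fin t) : f (tVtx e j) = -1 := by
  have ht1 : (t : ℝ) - 1 ≠ 0 := sub_ne_zero.2 (by exact_mod_cast ht.ne')
  have hS (i : Fin s) : adjMat G u (sVtx e i) * f (sVtx e i) = 0 := by
    have h := hf.sub_one_mul_apply_sVtx e hu hμ htμ i
    by_cases hadj : G.Adj u (sVtx e i)
    · simp only [adjMat_apply, hadj.symm, if_true, sub_self, mul_eq_zero, ht1, false_or] at h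
      simp [h]
    · simp [adjMat_apply, hadj]
  have hT (j : Fin t) : adjMat G u (tVtx e j) = 1 := by
    simp [adjMat_apply, hf.adj_tVtx e hu hμ htμ j]
  -- the eigenvalue equation at `u` itself
  have hμσ : μ = ∑ j, f (tVtx e j) := by
    have h := hf.mul_apply_eq e hu u
    rwa [hf.eq_on u hu, if_pos rfl, mul_one, Finset.sum_eq_zero fun i _ => hS i, adjMat_apply,
      if_neg (G.loopless.irrefl u), zero_add, zero_add,
      Finset.sum_congr rfl fun j _ => by rw [hT j, one_mul]] at h
  have hμ0 : μ ≠ 0 := by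
    have : (1 : ℝ) < t := by exact_mod_cast ht
    linarith
  have hrow := hf.mul_apply_tVtx_eq e hu j
  rw [adjMat_apply, if_pos (hf.adj_tVtx e hu hμ htμ j).symm] at hrow
  apply mul_left_cancel₀ hμ0
  linear_combination hrow + hf.one_add_sum_sVtx_add_sum_tVtx e hu hμ + hμσ

theorem card_not_adj_sVtx (hf : IsStarBasisVector G μ X u f) (hu : u ∈ X) (hμ : IsNonMain G μ)
    (htμ : (t : ℝ) + μ = 0) (ht : 1 < t) :
    (#{i | ¬ G.Adj u (sVtx e i)} : ℝ) = ((t : ℝ) - 1) ^ 2 := by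
  have hσ : ∑ i, f (sVtx e i) = t - 1 := by
    have h := hf.one_add_sum_sVtx_add_sum_tVtx e hu hμ
    simp only [hf.apply_tVtx e hu hμ htμ ht, Finset.sum_const, card_univ, Fintype.card_fin,
      nsmul_eq_mul, mul_neg, mul_one] at h
    linarith
  calc (#{i | ¬ G.Adj u (sVtx e i)} : ℝ)
      = ∑ i, (1 - adjMat G (sVtx e i) u) := by
        rw [← Finset.sum_boole]
        refine Finset.sum_congr rfl fun i _ => ?_
        by_cases hadj : G.Adj u (sVtx e i) <;> simp [adjMat_apply, hadj, G.adj_comm]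
    _ = ((t : ℝ) - 1) * ∑ i, f (sVtx e i) := by
        rw [Finset.mul_sum]
        exact Finset.sum_congr rfl fun i _ => (hf.sub_one_mul_apply_sVtx e hu hμ htμ i).symm
    _ = ((t : ℝ) - 1) ^ 2 := by rw [hσ, sq]

theorem card_adj_not_adj_sVtx (hf : IsStarBasisVector G μ X u f) (hu : u ∈ X)
    (hμ : IsNonMain G μ) (htμ : (t : ℝ) + μ = 0) (ht : 1 < t) {v : V} (hv : v ∈ X)
    (hvu : v ≠ u) (hvT : ∀ j, G.Adj v (tVtx e j)) :
    (#{i | G.Adj v (sVtx e i) ∧ ¬ G.Adj u (sVtx e i)} : ℝ)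
      = ((t : ℝ) - 1) * (t - adjMat G v u) := by
  have hT : ∑ j, adjMat G v (tVtx e j) * f (tVtx e j) = -t := by
    simp [hf.apply_tVtx e hu hμ htμ ht, adjMat_apply, hvT]
  have hrow := hf.mul_apply_eq e hu v
  rw [hf.eq_on v hv, if_neg hvu, mul_zero, hT] at hrow
  calc (#{i | G.Adj v (sVtx e i) ∧ ¬ G.Adj u (sVtx e i)} : ℝ)
      = ∑ i, adjMat G v (sVtx e i) * (1 - adjMat G (sVtx e i) u) := by
        rw [← Finset.sum_boole]
        refine Finset.sum_congr rfl fun i _ => ?_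
        by_cases hadj : G.Adj u (sVtx e i) <;> by_cases hvadj : G.Adj v (sVtx e i) <;>
          simp [adjMat_apply, hadj, hvadj, G.adj_comm]
    _ = ((t : ℝ) - 1) * ∑ i, adjMat G v (sVtx e i) * f (sVtx e i) := by
        rw [Finset.mul_sum]
        refine Finset.sum_congr rfl fun i _ => ?_
        rw [← hf.sub_one_mul_apply_sVtx e hu hμ htμ i]
        ring
    _ = ((t : ℝ) - 1) * (t - adjMat G v u) := by
        linear_combination (1 - (t : ℝ)) * hrow

end IsStarBasisVector

namespace IsStarSet

variable {μ : ℝ}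

theorem adj_tVtx (hX : IsStarSet G μ X) (hμ : IsNonMain G μ) (htμ : (t : ℝ) + μ = 0) {x : V}
    (hx : x ∈ X) (j : Fin t) : G.Adj x (tVtx e j) := by
  obtain ⟨f, hf⟩ := hX.exists_isStarBasisVector x
  exact hf.adj_tVtx e hx hμ htμ j

theorem card_not_adj_sVtx (hX : IsStarSet G μ X) (hμ : IsNonMain G μ) (htμ : (t : ℝ) + μ = 0)
    (ht : 1 < t) {u : V} (hu : u ∈ X) :
    (#{i | ¬ G.Adj u (sVtx e i)} : ℝ) = ((t : ℝ) - 1) ^ 2 := by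
  obtain ⟨f, hf⟩ := hX.exists_isStarBasisVector u
  exact hf.card_not_adj_sVtx e hu hμ htμ ht

theorem card_adj_not_adj_sVtx (hX : IsStarSet G μ X) (hμ : IsNonMain G μ)
    (htμ : (t : ℝ) + μ = 0) (ht : 1 < t) {u v : V} (hu : u ∈ X) (hv : v ∈ X) (hvu : v ≠ u) :
    (#{i | G.Adj v (sVtx e i) ∧ ¬ G.Adj u (sVtx e i)} : ℝ)
      = ((t : ℝ) - 1) * (t - adjMat G v u) := by
  obtain ⟨f, hf⟩ := hX.exists_isStarBasisVector u
  exact hf.card_adj_not_adj_sVtx e hu hμ htμ ht hv hvu (hX.adj_tVtx e hμ htμ hv)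

theorem isClique (hX : IsStarSet G μ X)
    (e : G.induce (↑X : Set V)ᶜ ≃g joinG (⊤ : SimpleGraph (Fin s)) (⊥ : SimpleGraph (Fin t)))
    (hμ : IsNonMain G μ) (htμ : (t : ℝ) + μ = 0) (ht : 1 < t) : G.IsClique (X : Set V) := by
  intro v hv u hu hvu
  by_contra hnadj
  have hle : #{i | G.Adj v (sVtx e i) ∧ ¬ G.Adj u (sVtx e i)} ≤ #{i | ¬ G.Adj u (sVtx e i)} :=
    Finset.card_le_card (Finset.monotone_filter_right _ fun _ _ h => h.2)
  have hle' := (Nat.cast_le (α := ℝ)).2 hle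
  rw [hX.card_adj_not_adj_sVtx e hμ htμ ht hu hv hvu,
    hX.card_not_adj_sVtx e hμ htμ ht hu, adjMat_apply, if_neg hnadj, sub_zero] at hle'
  have : (1 : ℝ) < t := by exact_mod_cast ht
  nlinarith

theorem adj_sVtx_of_not_adj_sVtx (hX : IsStarSet G μ X) (hμ : IsNonMain G μ)
    (htμ : (t : ℝ) + μ = 0) (ht : 1 < t) {u v : V} (hu : u ∈ X) (hv : v ∈ X) (hvu : v ≠ u)
    {i : Fin s} (hi : ¬ G.Adj u (sVtx e i)) : G.Adj v (sVtx e i) := by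
  have hcard :
      #{i | G.Adj v (sVtx e i) ∧ ¬ G.Adj u (sVtx e i)} = #{i | ¬ G.Adj u (sVtx e i)} := by
    have h := hX.card_adj_not_adj_sVtx e hμ htμ ht hu hv hvu
    rw [adjMat_apply, if_pos (hX.isClique e hμ htμ ht hv hu hvu),
      ← sq, ← hX.card_not_adj_sVtx e hμ htμ ht hu] at h
    exact_mod_cast h
  have hsub := Finset.eq_of_subset_of_card_le
    (Finset.monotone_filter_right _ fun _ _ h => h.2) hcard.ge
  have hi' : i ∈ ({i | ¬ G.Adj u (sVtx e i)} : Finset (Fin s)) := by simpa using hi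
  rw [← hsub] at hi'
  exact (Finset.mem_filter.1 hi').2.1

theorem eq_two (hX : IsStarSet G μ X)
    (e : G.induce (↑X : Set V)ᶜ ≃g joinG (⊤ : SimpleGraph (Fin s)) (⊥ : SimpleGraph (Fin t)))
    (hμ : IsNonMain G μ) (htμ : (t : ℝ) + μ = 0) (ht : 1 < t) {r : ℕ}
    (hreg : G.IsRegularOfDegree r) (hne : X.Nonempty) : t = 2 := by
  obtain ⟨u, hu⟩ := hne
  have hdeg := degree_add_one_add_card_not_adj e hu
    (fun x hx hxu => hX.isClique e hμ htμ ht hu hx hxu.symm) (hX.adj_tVtx e hμ htμ hu)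
  rw [hreg u, ← hreg (tVtx e ⟨0, by omega⟩),
    degree_tVtx e fun x hx => hX.adj_tVtx e hμ htμ hx _] at hdeg
  have hcard := hX.card_not_adj_sVtx e hμ htμ ht hu
  rw [show #{i | ¬ G.Adj u (sVtx e i)} = t - 1 by omega, Nat.cast_sub ht.le] at hcard
  have h : ((t : ℝ) - 1) * ((t : ℝ) - 2) = 0 := by linear_combination -hcard
  rcases mul_eq_zero.1 h with h | h
  · exact absurd h (sub_ne_zero.2 (by exact_mod_cast ht.ne'))
  · exact_mod_cast sub_eq_zero.1 h

theorem exists_not_adj_sVtx (hX : IsStarSet G μ X)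
    (e : G.induce (↑X : Set V)ᶜ ≃g joinG (⊤ : SimpleGraph (Fin s)) (⊥ : SimpleGraph (Fin t)))
    (hμ : IsNonMain G μ) (htμ : (t : ℝ) + μ = 0) (ht : 1 < t) {r : ℕ}
    (hreg : G.IsRegularOfDegree r) (i : Fin s) : ∃ x ∈ X, ¬ G.Adj (sVtx e i) x := by
  have hdeg := degree_sVtx_add_one e i
  rw [hreg, ← hreg (tVtx e ⟨0, by omega⟩),
    degree_tVtx e fun x hx => hX.adj_tVtx e hμ htμ hx _] at hdeg
  by_contra! hadj
  rw [Finset.filter_true_of_mem hadj] at hdeg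
  omega

end IsStarSet

end JoinComplement

theorem matchingG_compl_adj {n : ℕ} {a b : Fin n × Fin 2} :
    (matchingG n)ᶜ.Adj a b ↔ a.1 ≠ b.1 := by
  simp only [SimpleGraph.compl_adj, matchingG, ne_eq, Prod.ext_iff]
  tauto

section CocktailParty

variable {s : ℕ} {G : SimpleGraph V} {X : Finset V}
  (e : G.induce (↑X : Set V)ᶜ ≃g joinG (⊤ : SimpleGraph (Fin s)) (⊥ : SimpleGraph (Fin 2)))

theorem exists_pairing_of_card_not_adj_eq_one
    (hcard : ∀ u ∈ X, #{i | ¬ G.Adj u (sVtx e i)} = 1)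
    (hdisj : ∀ u ∈ X, ∀ v ∈ X, v ≠ u → ∀ i, ¬ G.Adj u (sVtx e i) → G.Adj v (sVtx e i))
    (hex : ∀ i, ∃ x ∈ X, ¬ G.Adj (sVtx e i) x) :
    ∃ w : Fin s → V, (∀ i, w i ∈ X) ∧ (∀ i i', G.Adj (w i) (sVtx e i') ↔ i ≠ i') ∧
      ∀ u ∈ X, ∃ i, w i = u := by
  choose w hwX hw using hex
  refine ⟨w, hwX, fun i i' => ⟨?_, fun hne => by_contra fun hnadj => ?_⟩, fun u hu => ?_⟩
  · rintro hadj rfl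
    exact hw i hadj.symm
  · have hwi : ¬ G.Adj (w i) (sVtx e i) := fun h => hw i h.symm
    exact hne (Finset.card_le_one.1 (hcard (w i) (hwX i)).le i (by simpa using hwi) i'
      (by simpa using hnadj))
  · obtain ⟨k, hk⟩ := Finset.card_eq_one.1 (hcard u hu)
    have huk : ¬ G.Adj u (sVtx e k) := by
      simpa using (Finset.ext_iff.1 hk k).2 (Finset.mem_singleton_self k)
    exact ⟨k, by_contra fun hne => hw k (hdisj u hu (w k) (hwX k) hne k huk).symm⟩

-- `(i, 0) ↦ w i`, `(i, 1) ↦ sVtx e i` for `i < s`, and `(s, j) ↦ tVtx e j`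
def cocktailVtx (w : Fin s → V) (p : Fin (s + 1) × Fin 2) : V :=
  Fin.lastCases (tVtx e p.2) (fun i => ![w i, sVtx e i] p.2) p.1

variable {w : Fin s → V}

theorem adj_cocktailVtx_iff (hXX : G.IsClique (X : Set V))
    (hXT : ∀ x ∈ X, ∀ j, G.Adj x (tVtx e j)) (hwX : ∀ i, w i ∈ X)
    (hwS : ∀ i i', G.Adj (w i) (sVtx e i') ↔ i ≠ i') (p q : Fin (s + 1) × Fin 2) :
    G.Adj (cocktailVtx e w p) (cocktailVtx e w q) ↔ p.1 ≠ q.1 := by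
  have hww (i i' : Fin s) : G.Adj (w i) (w i') ↔ i ≠ i' := by
    refine ⟨fun h hii => ?_, fun h => hXX (hwX i) (hwX i') fun hw => ?_⟩
    · subst hii
      exact G.loopless.irrefl _ h
    · have h' := hwS i i'
      rw [hw, hwS i' i'] at h'
      exact h'.2 h rfl
  have hSw (i i' : Fin s) : G.Adj (sVtx e i) (w i') ↔ i ≠ i' := by
    rw [G.adj_comm, hwS, ne_comm]
  have hwT (i : Fin s) (j : Fin 2) : G.Adj (w i) (tVtx e j) := hXT _ (hwX i) j
  have hTw (i : Fin s) (j : Fin 2) : G.Adj (tVtx e j) (w i) := (hwT i j).symm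
  obtain ⟨i, c⟩ := p
  obtain ⟨i', c'⟩ := q
  induction i using Fin.lastCases <;> induction i' using Fin.lastCases <;> fin_cases c <;>
    fin_cases c' <;>
    simp [cocktailVtx, hww, hwS, hSw, hwT, hTw, adj_sVtx_sVtx, adj_sVtx_tVtx, adj_tVtx_sVtx,
      not_adj_tVtx_tVtx, (Fin.castSucc_ne_last _).symm]

theorem cocktailVtx_injective (hXX : G.IsClique (X : Set V))
    (hXT : ∀ x ∈ X, ∀ j, G.Adj x (tVtx e j)) (hwX : ∀ i, w i ∈ X)
    (hwS : ∀ i i', G.Adj (w i) (sVtx e i') ↔ i ≠ i') : Function.Injective (cocktailVtx e w) := by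
  intro p q hpq
  have h1 : p.1 = q.1 := by
    by_contra h
    have hadj := (adj_cocktailVtx_iff e hXX hXT hwX hwS p q).2 h
    rw [hpq] at hadj
    exact G.loopless.irrefl _ hadj
  obtain ⟨i, c⟩ := p
  obtain ⟨i', c'⟩ := q
  obtain rfl : i = i' := h1
  have hSw (i : Fin s) : sVtx e i ≠ w i := fun h => sVtx_notMem e i (h ▸ hwX i)
  induction i using Fin.lastCases <;> fin_cases c <;> fin_cases c' <;>
    simp_all [cocktailVtx, (tVtx_injective e).eq_iff, (hSw _).symm]

theorem cocktailVtx_surjective (hw : ∀ u ∈ X, ∃ i, w i = u) :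
    Function.Surjective (cocktailVtx e w) := by
  intro v
  rcases mem_or_exists_sVtx_or_exists_tVtx e v with hv | ⟨i, rfl⟩ | ⟨j, rfl⟩
  · obtain ⟨i, rfl⟩ := hw v hv
    exact ⟨(i.castSucc, 0), by simp [cocktailVtx]⟩
  · exact ⟨(i.castSucc, 1), by simp [cocktailVtx]⟩
  · exact ⟨(Fin.last s, j), by simp [cocktailVtx]⟩

theorem nonempty_iso_compl_matchingG (hXX : G.IsClique (X : Set V))
    (hXT : ∀ x ∈ X, ∀ j, G.Adj x (tVtx e j)) (hwX : ∀ i, w i ∈ X)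
    (hwS : ∀ i i', G.Adj (w i) (sVtx e i') ↔ i ≠ i') (hw : ∀ u ∈ X, ∃ i, w i = u) :
    Nonempty (G ≃g (matchingG (s + 1))ᶜ) :=
  ⟨SimpleGraph.Iso.symm
    { toEquiv := Equiv.ofBijective _ ⟨cocktailVtx_injective e hXX hXT hwX hwS,
        cocktailVtx_surjective e hw⟩
      map_rel_iff' := fun {p q} =>
        (adj_cocktailVtx_iff e hXX hXT hwX hwS p q).trans matchingG_compl_adj.symm }⟩

end CocktailParty

theorem main_theorem_general {V : Type*} [Fintype V] [DecidableEq V] (s t : ℕ)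
    (ht : 2 ≤ t) (r : ℕ) (G : SimpleGraph V)
    (hreg : G.IsRegularOfDegree r) (μ : ℝ) (hμ : IsEigen G μ) (hnm : IsNonMain G μ)
    (X : Finset V) (hstar : IsStarSet G μ X)
    (hiso : Nonempty ((G.induce ((↑X : Set V)ᶜ)) ≃g
      joinG (⊤ : SimpleGraph (Fin s)) (⊥ : SimpleGraph (Fin t))))
    (htμ : (t : ℝ) + μ = 0) :
    μ = -2 ∧ t = 2 ∧ Nonempty (G ≃g (matchingG (s + 1))ᶜ) := by
  obtain ⟨e⟩ := hiso
  obtain rfl : t = 2 := hstar.eq_two e hnm htμ ht hreg (hstar.nonempty hμ)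
  refine ⟨by norm_num at htμ; linarith, rfl, ?_⟩
  have hcard (u : V) (hu : u ∈ X) : #{i | ¬ G.Adj u (sVtx e i)} = 1 := by
    have h := hstar.card_not_adj_sVtx e hnm htμ ht hu
    norm_num at h
    exact_mod_cast h
  obtain ⟨w, hwX, hwS, hw⟩ := exists_pairing_of_card_not_adj_eq_one e hcard
    (fun u hu v hv hvu _ => hstar.adj_sVtx_of_not_adj_sVtx e hnm htμ ht hu hv hvu)
    (hstar.exists_not_adj_sVtx e hnm htμ ht hreg)
  exact nonempty_iso_compl_matchingG e (hstar.isClique e hnm htμ ht)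
    (fun x hx => hstar.adj_tVtx e hnm htμ hx) hwX hwS hw

/-- Theorem 1: if an `r`-regular graph `G` has a star set `X` for a non-main
eigenvalue `μ` with star complement `G - X = K_s ∇ tK_1` (`s,t ≥ 2`) and `t + μ = 0`,
then `μ = -2`, `t = 2`, and `G` is the complement of `(s+1)K_2`. -/
theorem main_theorem {V : Type*} [Fintype V] [DecidableEq V] (s t : ℕ)
    (hs : 2 ≤ s) (ht : 2 ≤ t) (r : ℕ) (G : SimpleGraph V)
    (hreg : G.IsRegularOfDegree r) (μ : ℝ) (hμ : IsEigen G μ) (hnm : IsNonMain G μ)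
    (X : Finset V) (hstar : IsStarSet G μ X)
    (hiso : Nonempty ((G.induce ((↑X : Set V)ᶜ)) ≃g
      joinG (⊤ : SimpleGraph (Fin s)) (⊥ : SimpleGraph (Fin t))))
    (htμ : (t : ℝ) + μ = 0) :
    μ = -2 ∧ t = 2 ∧ Nonempty (G ≃g (matchingG (s + 1))ᶜ) :=
  main_theorem_general s t ht r G hreg μ hμ hnm X hstar hiso htμ
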